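/- Fix $m>0$ and an integer $n \ge 2$. Let $X:[m/2,\infty)\to\mathbb{R}$ be $C^1$ and bounded, and let $Y:[m/2,\infty)\to\mathbb{R}$ be continuous. If both the improper integral $I_n = \int_{m/2}^{\infty}\big[(r X' - \beta_n Y)^2 + 2(N-1)\alpha X Y\big]\frac{dr}{\alpha\, r^2\, \psi_0}$ and the improper integral $\int_{m/2}^{\infty} \frac{\beta_n^2}{\alpha\, r^2\, \psi_0}\big(Y - \frac{r}{\beta_n} X' + \frac{(N-1)\alpha}{\beta_n^2} X\big)^2 dr$ converge, then $I_n \ge -\frac{N-1}{m(2N+1)}\, X(m/2)^2$. -/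

import Mathlib

/-- `ψ₀(r) = 1 + m/(2r)`. -/
noncomputable def psi0 (m r : ℝ) : ℝ := 1 + m / (2 * r)

/-- `α(r) = 1 - m/(2r)`. -/
noncomputable def alphaF (m r : ℝ) : ℝ := 1 - m / (2 * r)

/-- `N = n(n+1)/2`. -/
noncomputable def Nn (n : ℕ) : ℝ := (n : ℝ) * ((n : ℝ) + 1) / 2

/-- `β_n(r) = (N-1) ψ₀(r) + 3m/(r ψ₀(r))`. -/
noncomputable def betaF (m : ℝ) (n : ℕ) (r : ℝ) : ℝ :=
  (Nn n - 1) * psi0 m r + 3 * m / (r * psi0 m r)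

/-- The improper integral `∫_a^∞ f` converges and equals `L`. -/
def ImproperEq (f : ℝ → ℝ) (a L : ℝ) : Prop :=
  (∀ b : ℝ, IntervalIntegrable f MeasureTheory.volume a b) ∧
    Filter.Tendsto (fun b : ℝ => ∫ r in a..b, f r) Filter.atTop (nhds L)

/-
The integrand of `I_n` minus the completed-square integrand is an exact derivative: with
`W = (N-1) X² / (r ψ₀ β_n)` one has `(r ψ₀ β_n)' = (N-1) α ψ₀`, and the difference of the two
integrands is `W'`. Hence `I_n = L + lim W - W(m/2)` with `L ≥ 0` the completed-square integral.
Since `r ψ₀ β_n ≥ (N-1) r` and `X` is bounded, `W → 0` at infinity, and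
`r ψ₀ β_n = m(2N+1)` at the horizon `r = m/2`.
-/

open Filter Topology Set MeasureTheory

namespace ImproperEq

variable {f g : ℝ → ℝ} {a I J : ℝ}

theorem sub (hf : ImproperEq f a I) (hg : ImproperEq g a J) :
    ImproperEq (fun r => f r - g r) a (I - J) :=
  ⟨fun b => (hf.1 b).sub (hg.1 b), by
    simpa only [intervalIntegral.integral_sub (hf.1 _) (hg.1 _)] using hf.2.sub hg.2⟩

theorem unique (hI : ImproperEq f a I) (hJ : ImproperEq f a J) : I = J :=
  tendsto_nhds_unique hI.2 hJ.2

theorem nonneg (hf : ImproperEq f a I) (hpos : ∀ r, a ≤ r → 0 ≤ f r) : 0 ≤ I := by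
  refine ge_of_tendsto hf.2 ?_
  filter_upwards [eventually_ge_atTop a] with b hb
  exact intervalIntegral.integral_nonneg hb fun r hr => hpos r hr.1

theorem of_hasDerivAt {W : ℝ → ℝ} {ℓ : ℝ} (hWc : ContinuousOn W (Ici a))
    (hW : ∀ r, a < r → HasDerivAt W (f r) r) (hf : ∀ b, IntervalIntegrable f volume a b)
    (hlim : Tendsto W atTop (𝓝 ℓ)) : ImproperEq f a (ℓ - W a) := by
  refine ⟨hf, (hlim.sub_const (W a)).congr' ?_⟩
  filter_upwards [eventually_ge_atTop a] with b hb
  exact (intervalIntegral.integral_eq_sub_of_hasDerivAt_of_le hb (hWc.mono Icc_subset_Ici_self)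
    (fun r hr => hW r hr.1) (hf b)).symm

end ImproperEq

theorem one_le_Nn {n : ℕ} (hn : 1 ≤ n) : 1 ≤ Nn n := by
  have : (1 : ℝ) ≤ n := by exact_mod_cast hn
  unfold Nn
  nlinarith

section Schwarzschild

variable {m r : ℝ} {n : ℕ}

theorem psi0_pos (hm : 0 ≤ m) (hr : 0 < r) : 0 < psi0 m r := by
  unfold psi0
  positivity

theorem alphaF_nonneg (hm : 0 < m) (hr : m / 2 ≤ r) : 0 ≤ alphaF m r := by
  unfold alphaF
  rw [sub_nonneg, div_le_one (by linarith)]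
  linarith

theorem alphaF_pos (hm : 0 < m) (hr : m / 2 < r) : 0 < alphaF m r := by
  unfold alphaF
  rw [sub_pos, div_lt_one (by linarith)]
  linarith

theorem betaF_pos (hm : 0 < m) (hn : 1 ≤ n) (hr : 0 < r) : 0 < betaF m n r := by
  have hψ := psi0_pos hm.le hr
  have hN := one_le_Nn hn
  unfold betaF
  positivity

theorem mul_psi0_mul_betaF (hm : 0 ≤ m) (hr : 0 < r) :
    r * psi0 m r * betaF m n r = (Nn n - 1) * (r + m + m ^ 2 / (4 * r)) + 3 * m := by
  have hψ := (psi0_pos hm hr).ne'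
  unfold betaF
  field_simp
  unfold psi0
  field_simp
  ring

theorem hasDerivAt_mul_psi0_mul_betaF (hm : 0 ≤ m) (hr : 0 < r) :
    HasDerivAt (fun s => s * psi0 m s * betaF m n s)
      ((Nn n - 1) * alphaF m r * psi0 m r) r := by
  have hD : HasDerivAt (fun s => (Nn n - 1) * (s + m + m ^ 2 / 4 * s⁻¹) + 3 * m)
      ((Nn n - 1) * (1 + m ^ 2 / 4 * -(r ^ 2)⁻¹)) r :=
    ((((hasDerivAt_id r).add_const m).add
      ((hasDerivAt_inv hr.ne').const_mul (m ^ 2 / 4))).const_mul _).add_const _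
  refine (hD.congr_deriv ?_).congr_of_eventuallyEq ?_
  · unfold alphaF psi0
    field_simp
    ring
  · filter_upwards [lt_mem_nhds hr] with s hs
    rw [mul_psi0_mul_betaF hm hs]
    ring

end Schwarzschild

theorem sq_form_sub_completed_square {𝕜 : Type*} [Field 𝕜] (K r ψ α β X X' Y : 𝕜)
    (hr : r ≠ 0) (hψ : ψ ≠ 0) (hα : α ≠ 0) (hβ : β ≠ 0) :
    ((r * X' - β * Y) ^ 2 + 2 * K * α * X * Y) / (α * r ^ 2 * ψ)
      - β ^ 2 / (α * r ^ 2 * ψ) * (Y - r / β * X' + K * α / β ^ 2 * X) ^ 2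
    = (K * (2 * X * X') * (r * ψ * β) - K * X ^ 2 * (K * α * ψ)) / (r * ψ * β) ^ 2 := by
  field_simp
  ring

/-- The integrand of `I_n` at `r`, evaluated at `X = x`, `X' = x'`, `Y = y`. -/
noncomputable def inDensity (m : ℝ) (n : ℕ) (r x x' y : ℝ) : ℝ :=
  ((r * x' - betaF m n r * y) ^ 2 + 2 * (Nn n - 1) * alphaF m r * x * y)
    / (alphaF m r * r ^ 2 * psi0 m r)

noncomputable def squareDensity (m : ℝ) (n : ℕ) (r x x' y : ℝ) : ℝ :=
  betaF m n r ^ 2 / (alphaF m r * r ^ 2 * psi0 m r) *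
    (y - r / betaF m n r * x' + (Nn n - 1) * alphaF m r / betaF m n r ^ 2 * x) ^ 2

noncomputable def boundaryTerm (m : ℝ) (n : ℕ) (X : ℝ → ℝ) (r : ℝ) : ℝ :=
  (Nn n - 1) * X r ^ 2 / (r * psi0 m r * betaF m n r)

section BoundaryTerm

variable {m r : ℝ} {n : ℕ} {X : ℝ → ℝ}

theorem squareDensity_nonneg (hm : 0 < m) (hr : m / 2 ≤ r) (x x' y : ℝ) :
    0 ≤ squareDensity m n r x x' y := by
  have hα := alphaF_nonneg hm hr
  have hψ := psi0_pos hm.le (by linarith : 0 < r)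
  unfold squareDensity
  positivity

theorem hasDerivAt_boundaryTerm (hm : 0 < m) (hn : 1 ≤ n) (hr : m / 2 < r) {x' : ℝ}
    (hX : HasDerivAt X x' r) (y : ℝ) :
    HasDerivAt (boundaryTerm m n X)
      (inDensity m n r (X r) x' y - squareDensity m n r (X r) x' y) r := by
  have hr0 : 0 < r := by linarith
  have hX2 : HasDerivAt (fun s => (Nn n - 1) * X s ^ 2) ((Nn n - 1) * (2 * X r * x')) r := by
    refine ((hX.pow 2).const_mul _).congr_deriv ?_
    push_cast
    ring
  have hW := hX2.div (hasDerivAt_mul_psi0_mul_betaF hm.le hr0)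
    (mul_pos (mul_pos hr0 (psi0_pos hm.le hr0)) (betaF_pos hm hn hr0)).ne'
  rwa [inDensity, squareDensity, sq_form_sub_completed_square _ _ _ _ _ _ _ _ hr0.ne'
    (psi0_pos hm.le hr0).ne' (alphaF_pos hm hr).ne' (betaF_pos hm hn hr0).ne']

theorem continuousOn_boundaryTerm (hm : 0 < m) (hn : 1 ≤ n) (hX : ContinuousOn X (Ici (m / 2))) :
    ContinuousOn (boundaryTerm m n X) (Ici (m / 2)) := by
  have hpos : ∀ r ∈ Ici (m / 2), 0 < r := fun r hr => by simp only [mem_Ici] at hr; linarith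
  refine ((hX.pow 2).const_smul (Nn n - 1)).div (fun r hr => ?_) fun r hr => ?_
  · exact (hasDerivAt_mul_psi0_mul_betaF hm.le (hpos r hr)).continuousAt.continuousWithinAt
  · have hr0 := hpos r hr
    exact (mul_pos (mul_pos hr0 (psi0_pos hm.le hr0)) (betaF_pos hm hn hr0)).ne'

theorem tendsto_boundaryTerm_atTop (hm : 0 < m) (hn : 1 ≤ n) {C : ℝ}
    (hC : ∀ r, m / 2 ≤ r → |X r| ≤ C) : Tendsto (boundaryTerm m n X) atTop (𝓝 0) := by
  have hK : 0 ≤ Nn n - 1 := by linarith [one_le_Nn hn]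
  refine squeeze_zero_norm' ?_ ((tendsto_const_nhds (x := C ^ 2)).div_atTop tendsto_id)
  filter_upwards [eventually_ge_atTop (m / 2)] with b hb
  have hb0 : 0 < b := by linarith
  have hXb : X b ^ 2 ≤ C ^ 2 := sq_le_sq' (abs_le.mp (hC b hb)).1 (abs_le.mp (hC b hb)).2
  have hD : (Nn n - 1) * b + 3 * m ≤ b * psi0 m b * betaF m n b := by
    rw [mul_psi0_mul_betaF hm.le hb0]
    have : 0 ≤ (Nn n - 1) * (m + m ^ 2 / (4 * b)) := by positivity
    linarith
  have hD0 : 0 < b * psi0 m b * betaF m n b := by linarith [mul_nonneg hK hb0.le]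
  rw [Real.norm_eq_abs, boundaryTerm, abs_of_nonneg (div_nonneg (by positivity) hD0.le), id,
    div_le_div_iff₀ hD0 hb0]
  calc (Nn n - 1) * X b ^ 2 * b ≤ C ^ 2 * ((Nn n - 1) * b + 3 * m) := by
        nlinarith [sq_nonneg (X b), mul_nonneg hK hb0.le]
    _ ≤ C ^ 2 * (b * psi0 m b * betaF m n b) := by gcongr

theorem boundaryTerm_half (hm : 0 < m) :
    boundaryTerm m n X (m / 2) = (Nn n - 1) / (m * (2 * Nn n + 1)) * X (m / 2) ^ 2 := by
  have hD : (Nn n - 1) * (m / 2 + m + m ^ 2 / (4 * (m / 2))) + 3 * m = m * (2 * Nn n + 1) := by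
    field_simp
    ring
  rw [boundaryTerm, mul_psi0_mul_betaF hm.le (by positivity), hD]
  ring

end BoundaryTerm

theorem In_lower_bound_general (m : ℝ) (hm : 0 < m) (n : ℕ) (hn : 2 ≤ n)
    (X Y : ℝ → ℝ) (hX : ContDiffOn ℝ 1 X (Set.Ici (m / 2)))
    (hXbdd : ∃ C : ℝ, ∀ r : ℝ, m / 2 ≤ r → |X r| ≤ C)
    (In : ℝ)
    (hIn : ImproperEq
      (fun r : ℝ => ((r * deriv X r - betaF m n r * Y r) ^ 2
          + 2 * (Nn n - 1) * alphaF m r * X r * Y r)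
        / (alphaF m r * r ^ 2 * psi0 m r))
      (m / 2) In)
    (hSq : ∃ L : ℝ, ImproperEq
      (fun r : ℝ => (betaF m n r) ^ 2 / (alphaF m r * r ^ 2 * psi0 m r) *
        (Y r - r / betaF m n r * deriv X r
          + (Nn n - 1) * alphaF m r / (betaF m n r) ^ 2 * X r) ^ 2)
      (m / 2) L) :
    In ≥ -((Nn n - 1) / (m * (2 * Nn n + 1))) * X (m / 2) ^ 2 := by
  obtain ⟨C, hC⟩ := hXbdd
  obtain ⟨L, hL⟩ := hSq
  have hn1 : 1 ≤ n := by omega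
  have hXd : ∀ r, m / 2 < r → HasDerivAt X (deriv X r) r := fun r hr =>
    ((hX.differentiableOn one_ne_zero).differentiableAt (Ici_mem_nhds hr)).hasDerivAt
  have hW : ImproperEq (fun r => inDensity m n r (X r) (deriv X r) (Y r)
      - squareDensity m n r (X r) (deriv X r) (Y r)) (m / 2) (0 - boundaryTerm m n X (m / 2)) :=
    ImproperEq.of_hasDerivAt (continuousOn_boundaryTerm hm hn1 hX.continuousOn)
      (fun r hr => hasDerivAt_boundaryTerm hm hn1 hr (hXd r hr) (Y r))
      (fun b => (hIn.1 b).sub (hL.1 b)) (tendsto_boundaryTerm_atTop hm hn1 hC)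
  have hIL : In - L = 0 - boundaryTerm m n X (m / 2) := (hIn.sub hL).unique hW
  have hL0 : 0 ≤ L := hL.nonneg fun r hr => squareDensity_nonneg hm hr _ _ _
  rw [boundaryTerm_half hm] at hIL
  linarith

/-- Estimate (40c): `I_n ≥ -(N-1)/(m(2N+1)) X(m/2)²`. -/
theorem In_lower_bound (m : ℝ) (hm : 0 < m) (n : ℕ) (hn : 2 ≤ n)
    (X Y : ℝ → ℝ) (hX : ContDiffOn ℝ 1 X (Set.Ici (m / 2)))
    (hXbdd : ∃ C : ℝ, ∀ r : ℝ, m / 2 ≤ r → |X r| ≤ C)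
    (hY : ContinuousOn Y (Set.Ici (m / 2)))
    (In : ℝ)
    (hIn : ImproperEq
      (fun r : ℝ => ((r * deriv X r - betaF m n r * Y r) ^ 2
          + 2 * (Nn n - 1) * alphaF m r * X r * Y r)
        / (alphaF m r * r ^ 2 * psi0 m r))
      (m / 2) In)
    (hSq : ∃ L : ℝ, ImproperEq
      (fun r : ℝ => (betaF m n r) ^ 2 / (alphaF m r * r ^ 2 * psi0 m r) *
        (Y r - r / betaF m n r * deriv X r
          + (Nn n - 1) * alphaF m r / (betaF m n r) ^ 2 * X r) ^ 2)
      (m / 2) L) :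
    In ≥ -((Nn n - 1) / (m * (2 * Nn n + 1))) * X (m / 2) ^ 2 :=
  In_lower_bound_general m hm n hn X Y hX hXbdd In hIn hSq
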